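/- arXiv:2205.10125 — 3 statements merged into one kernel-verified Lean document; each statement's English description precedes it below -/
import Mathlib

section
/- Let 𝒞 be a finite fuzzy covering of U and O an overlap function. Then for all x, y ∈ U, sup over K ∈ 𝒞 of O(K(x), K(y)) equals sup over K ∈ MD(𝒞,x) of O(K(x), K(y)), where MD(𝒞,x) is the fuzzy maximal description of x. -/
open Set

/-- An overlap function on `[0,1]`. -/
structure IsOverlap (O : ℝ → ℝ → ℝ) : Prop where
  mem : ∀ x ∈ Icc (0:ℝ) 1, ∀ y ∈ Icc (0:ℝ) 1, O x y ∈ Icc (0:ℝ) 1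
  comm : ∀ x ∈ Icc (0:ℝ) 1, ∀ y ∈ Icc (0:ℝ) 1, O x y = O y x
  zero_iff : ∀ x ∈ Icc (0:ℝ) 1, ∀ y ∈ Icc (0:ℝ) 1, (O x y = 0 ↔ x * y = 0)
  one_iff : ∀ x ∈ Icc (0:ℝ) 1, ∀ y ∈ Icc (0:ℝ) 1, (O x y = 1 ↔ x * y = 1)
  mono : ∀ x ∈ Icc (0:ℝ) 1, ∀ ⦃y z : ℝ⦄, y ∈ Icc (0:ℝ) 1 → z ∈ Icc (0:ℝ) 1 → y ≤ z → O x y ≤ O x z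
  cont : ContinuousOn (fun p : ℝ × ℝ => O p.1 p.2) (Icc (0:ℝ) 1 ×ˢ Icc (0:ℝ) 1)

/-- The residual implicator `I_O(x,y) = max {z ∈ [0,1] : O(x,z) ≤ y}`. -/
noncomputable def Iop (O : ℝ → ℝ → ℝ) (x y : ℝ) : ℝ :=
  sSup {z | z ∈ Icc (0:ℝ) 1 ∧ O x z ≤ y}

/-- A finite fuzzy covering of `U`. -/
structure IsFuzzyCovering (U : Type*) (C : Set (U → ℝ)) : Prop where
  finite : C.Finite
  mem : ∀ K ∈ C, ∀ x, K x ∈ Set.Icc (0:ℝ) 1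
  nonempty : ∀ K ∈ C, ∃ x, 0 < K x
  covers : ∀ x, ∃ K ∈ C, K x = 1

/-- The fuzzy minimal description of `x`. -/
def md {U : Type*} (C : Set (U → ℝ)) (x : U) : Set (U → ℝ) :=
  {K | K ∈ C ∧ 0 < K x ∧
    ∀ S, (S ∈ C ∧ 0 < S x) → S x = K x → (∀ u, S u ≤ K u) → S = K}

/-- The fuzzy maximal description of `x`. -/
def MD {U : Type*} (C : Set (U → ℝ)) (x : U) : Set (U → ℝ) :=
  {K | K ∈ C ∧ 0 < K x ∧
    ∀ S, (S ∈ C ∧ 0 < S x) → S x = K x → (∀ u, K u ≤ S u) → S = K}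

theorem sup_covering_eq_sup_MD {U : Type*} (C : Set (U → ℝ)) (hC : IsFuzzyCovering U C)
    (O : ℝ → ℝ → ℝ) (hO : IsOverlap O) :
    ∀ x y : U,
      (⨆ K ∈ C, O (K x) (K y)) = ⨆ K ∈ MD C x, O (K x) (K y) := by
  intro x y
  have hMDsub : MD C x ⊆ C := fun K hK => hK.1
  have hfb : ∀ K ∈ C, O (K x) (K y) ∈ Icc (0:ℝ) 1 := fun K hK =>
    hO.mem _ (hC.mem K hK x) _ (hC.mem K hK y)
  have bddC : BddAbove (Set.range fun K => ⨆ (_ : K ∈ C), O (K x) (K y)) := by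
    refine ⟨1, ?_⟩
    rintro _ ⟨K, rfl⟩
    exact Real.iSup_le (fun h => (hfb K h).2) zero_le_one
  have bddMD : BddAbove (Set.range fun K => ⨆ (_ : K ∈ MD C x), O (K x) (K y)) := by
    refine ⟨1, ?_⟩
    rintro _ ⟨K, rfl⟩
    exact Real.iSup_le (fun h => (hfb K (hMDsub h)).2) zero_le_one
  have hnnMD : (0:ℝ) ≤ ⨆ K ∈ MD C x, O (K x) (K y) :=
    Real.iSup_nonneg fun K => Real.iSup_nonneg fun h => (hfb K (hMDsub h)).1
  have hnnC : (0:ℝ) ≤ ⨆ K ∈ C, O (K x) (K y) :=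
    Real.iSup_nonneg fun K => Real.iSup_nonneg fun h => (hfb K h).1
  apply le_antisymm
  · refine Real.iSup_le (fun K => Real.iSup_le (fun hK => ?_) hnnMD) hnnMD
    rcases eq_or_lt_of_le (hC.mem K hK x).1 with hx0 | hxpos
    · have : O (K x) (K y) = 0 := by
        refine (hO.zero_iff _ (hC.mem K hK x) _ (hC.mem K hK y)).mpr ?_
        rw [← hx0, zero_mul]
      rw [this]; exact hnnMD
    · -- find a maximal element above K among those with the same value at x
      set s : Set (U → ℝ) := {S | S ∈ C ∧ S x = K x ∧ ∀ u, K u ≤ S u} with hs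
      have hsfin : s.Finite := hC.finite.subset (fun S hS => hS.1)
      have hsne : s.Nonempty := ⟨K, hK, rfl, fun u => le_rfl⟩
      obtain ⟨K', hK's, hmax⟩ : ∃ a ∈ s, ∀ a' ∈ s, id a ≤ id a' → id a = id a' := by
        obtain ⟨a, ha, h⟩ := hsfin.exists_maximalFor id s hsne
        exact ⟨a, ha, fun a' ha' hle => le_antisymm hle (h ha' hle)⟩
      obtain ⟨hK'C, hK'x, hK'ge⟩ := hK's
      have hK'MD : K' ∈ MD C x := by
        refine ⟨hK'C, by rw [hK'x]; exact hxpos, ?_⟩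
        rintro S ⟨hSC, hSx⟩ hSxK' hle
        exact (hmax S ⟨hSC, by rw [hSxK', hK'x], fun u => le_trans (hK'ge u) (hle u)⟩
          (fun u => hle u)).symm
      have hstep : O (K x) (K y) ≤ O (K' x) (K' y) := by
        rw [hK'x]
        exact hO.mono _ (hC.mem K hK x) (hC.mem K hK y) (hC.mem K' hK'C y) (hK'ge y)
      refine le_trans hstep ?_
      have : O (K' x) (K' y) = ⨆ (_ : K' ∈ MD C x), O (K' x) (K' y) :=
        (ciSup_pos (f := fun _ => O (K' x) (K' y)) hK'MD).symm
      rw [this]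
      exact le_ciSup bddMD K'
  · refine Real.iSup_le (fun K => Real.iSup_le (fun hK => ?_) hnnC) hnnC
    have : O (K x) (K y) = ⨆ (_ : K ∈ C), O (K x) (K y) :=
      (ciSup_pos (f := fun _ => O (K x) (K y)) (hMDsub hK)).symm
    rw [this]
    exact le_ciSup bddC K
end

section
/- Let 𝒞 be a finite fuzzy covering of U and O an overlap function. Then the fuzzy neighborhood operator N₂(x)(y) = sup over K ∈ md(𝒞,x) of O(K(x), K(y)) is reflexive: N₂(x)(x) = 1 for all x ∈ U. -/
open Set

theorem N2_reflexive {U : Type*} (C : Set (U → ℝ)) (hC : IsFuzzyCovering U C)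
    (O : ℝ → ℝ → ℝ) (hO : IsOverlap O) :
    ∀ x : U, (⨆ K ∈ md C x, O (K x) (K x)) = 1 := by
  intro x
  obtain ⟨K, hKC, hKx⟩ := hC.covers x
  -- the set of covering sets below K with value 1 at x
  set T : Set (U → ℝ) := {S | S ∈ C ∧ S x = 1 ∧ ∀ u, S u ≤ K u} with hT
  have hTfin : T.Finite := hC.finite.subset fun S hS => hS.1
  have hTne : T.Nonempty := ⟨K, hKC, hKx, fun u => le_rfl⟩
  obtain ⟨M, hMT, hMmin⟩ := hTfin.exists_minimalFor id T hTne
  have hMC := hMT.1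
  have hMx : M x = 1 := hMT.2.1
  have hMmd : M ∈ md C x := by
    refine ⟨hMC, by rw [hMx]; norm_num, ?_⟩
    intro S hS hSx hSle
    have hST : S ∈ T := ⟨hS.1, by rw [hSx, hMx], fun u => le_trans (hSle u) (hMT.2.2 u)⟩
    have := hMmin hST (fun u => hSle u)
    exact le_antisymm (fun u => hSle u) this
  have hO11 : O 1 1 = 1 := by
    have h1 : (1:ℝ) ∈ Icc (0:ℝ) 1 := by norm_num
    exact (hO.one_iff 1 h1 1 h1).2 (by norm_num)
  have hle1 : ∀ K' : U → ℝ, K' ∈ md C x → O (K' x) (K' x) ≤ 1 := by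
    intro K' hK'
    have h := hC.mem K' hK'.1 x
    exact (hO.mem _ h _ h).2
  have hbdd : BddAbove (Set.range fun K' : U → ℝ => ⨆ _ : K' ∈ md C x, O (K' x) (K' x)) := by
    refine ⟨1, ?_⟩
    rintro y ⟨K', rfl⟩
    by_cases h : K' ∈ md C x
    · simp only [ciSup_pos h]; exact hle1 K' h
    · simp [h, Real.iSup_of_isEmpty]
  apply le_antisymm
  · refine ciSup_le fun K' => ?_
    by_cases h : K' ∈ md C x
    · simp only [ciSup_pos h]; exact hle1 K' h
    · simp [h, Real.iSup_of_isEmpty]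
  · calc (1:ℝ) = ⨆ _ : M ∈ md C x, O (M x) (M x) := by
          rw [ciSup_pos hMmd, hMx, hO11]
      _ ≤ _ := le_ciSup hbdd M
end

section
/- Let N be a fuzzy neighborhood operator on U, and X a fuzzy set such that 1 − N(x)(x) ≤ X(x) ≤ N(x)(x) for all x ∈ U. Then L(L(X)) ⊆ L(X) ⊆ X ⊆ H(X) ⊆ H(H(X)), where L(X)(x) = inf_y max(1 − N(x)(y), X(y)) and H(X)(x) = sup_y min(N(x)(y), X(y)). -/
open Set

variable {U : Type*}

/-- The lower approximation determined by a fuzzy neighborhood operator `N`. -/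
noncomputable def lowApp (N : U → U → ℝ) (X : U → ℝ) (x : U) : ℝ :=
  ⨅ y, max (1 - N x y) (X y)

/-- The upper approximation determined by a fuzzy neighborhood operator `N`. -/
noncomputable def upApp (N : U → U → ℝ) (X : U → ℝ) (x : U) : ℝ :=
  ⨆ y, min (N x y) (X y)

/-! Both approximations are conditionally complete infima/suprema in `ℝ`, where an unbounded
family would give the junk value `0`; `N ≤ 1` is what bounds them. -/

section

variable {N : U → U → ℝ} (hN : ∀ x y, N x y ≤ 1)
include hN

lemma bddBelow_range_lowApp (X : U → ℝ) (x : U) :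
    BddBelow (range fun y => max (1 - N x y) (X y)) :=
  ⟨0, by
    rintro _ ⟨y, rfl⟩
    exact (sub_nonneg.mpr (hN x y)).trans (le_max_left _ _)⟩

lemma bddAbove_range_upApp (X : U → ℝ) (x : U) :
    BddAbove (range fun y => min (N x y) (X y)) :=
  ⟨1, by
    rintro _ ⟨y, rfl⟩
    exact (min_le_left _ _).trans (hN x y)⟩

lemma lowApp_mono [Nonempty U] {X Y : U → ℝ} (hXY : X ≤ Y) : lowApp N X ≤ lowApp N Y :=
  fun x => ciInf_mono (bddBelow_range_lowApp hN X x) fun y => max_le_max le_rfl (hXY y)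

lemma upApp_mono [Nonempty U] {X Y : U → ℝ} (hXY : X ≤ Y) : upApp N X ≤ upApp N Y :=
  fun x => ciSup_mono (bddAbove_range_upApp hN Y x) fun y => min_le_min le_rfl (hXY y)

lemma lowApp_le_self {X : U → ℝ} (hX : ∀ x, 1 - N x x ≤ X x) : lowApp N X ≤ X := fun x =>
  calc lowApp N X x ≤ max (1 - N x x) (X x) := ciInf_le (bddBelow_range_lowApp hN X x) x
    _ = X x := max_eq_right (hX x)

lemma le_upApp_self {X : U → ℝ} (hX : ∀ x, X x ≤ N x x) : X ≤ upApp N X := fun x =>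
  calc X x = min (N x x) (X x) := (min_eq_right (hX x)).symm
    _ ≤ upApp N X x := le_ciSup (bddAbove_range_upApp hN X x) x

end

theorem approx_sandwich_general [Nonempty U] (N : U → U → ℝ)
    (hN : ∀ x y, N x y ∈ Icc (0:ℝ) 1)
    (X : U → ℝ)
    (h : ∀ x, 1 - N x x ≤ X x ∧ X x ≤ N x x) :
    (∀ x, lowApp N (lowApp N X) x ≤ lowApp N X x) ∧
    (∀ x, lowApp N X x ≤ X x) ∧
    (∀ x, X x ≤ upApp N X x) ∧
    (∀ x, upApp N X x ≤ upApp N (upApp N X) x) := by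
  have hN₁ : ∀ x y, N x y ≤ 1 := fun x y => (hN x y).2
  have hLX : lowApp N X ≤ X := lowApp_le_self hN₁ fun x => (h x).1
  have hHX : X ≤ upApp N X := le_upApp_self hN₁ fun x => (h x).2
  exact ⟨lowApp_mono hN₁ hLX, hLX, hHX, upApp_mono hN₁ hHX⟩

theorem approx_sandwich [Nonempty U] (N : U → U → ℝ)
    (hN : ∀ x y, N x y ∈ Icc (0:ℝ) 1)
    (X : U → ℝ) (hX : ∀ x, X x ∈ Icc (0:ℝ) 1)
    (h : ∀ x, 1 - N x x ≤ X x ∧ X x ≤ N x x) :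
    (∀ x, lowApp N (lowApp N X) x ≤ lowApp N X x) ∧
    (∀ x, lowApp N X x ≤ X x) ∧
    (∀ x, X x ≤ upApp N X x) ∧
    (∀ x, upApp N X x ≤ upApp N (upApp N X) x) :=
  approx_sandwich_general N hN X h
end
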